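/- The Ehrhart polynomial function M ↦ E_{Q(M)}(x) is a valuation under matroid subdivisions. -/

import Mathlib

open Finset
open scoped Pointwise

/-- The indicator vector `e_B ∈ ℝⁿ` of a subset `B ⊆ [n]`. -/
def indVec (n : ℕ) (B : Finset (Fin n)) : Fin n → ℝ := fun i => if i ∈ B then 1 else 0

/-- A collection of subsets of `[n]` is the collection of bases of a matroid
(possibly the empty matroid) iff it satisfies the basis exchange axiom. -/
def IsBases {n : ℕ} (𝓑 : Finset (Finset (Fin n))) : Prop :=
  ∀ B₁ ∈ 𝓑, ∀ B₂ ∈ 𝓑, ∀ b₁ ∈ B₁ \ B₂, ∃ b₂ ∈ B₂ \ B₁, insert b₂ (B₁.erase b₁) ∈ 𝓑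

/-- The matroid (basis) polytope: convex hull of indicator vectors of the bases. -/
def polytope {n : ℕ} (𝓑 : Finset (Finset (Fin n))) : Set (Fin n → ℝ) :=
  convexHull ℝ (indVec n '' ↑𝓑)

/-- A subdivision of a polytope `P` into polytopes `Ps i`: their union is `P`,
their vertices are vertices of `P`, and each pairwise intersection is a proper
(exposed) face of both pieces. -/
def IsSubdivision {n m : ℕ} (P : Set (Fin n → ℝ)) (Ps : Fin m → Set (Fin n → ℝ)) : Prop :=
  (⋃ i, Ps i) = P ∧
  (∀ i, Set.extremePoints ℝ (Ps i) ⊆ Set.extremePoints ℝ P) ∧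
  ∀ i j, i ≠ j →
    IsExposed ℝ (Ps i) (Ps i ∩ Ps j) ∧ IsExposed ℝ (Ps j) (Ps i ∩ Ps j) ∧
    Ps i ∩ Ps j ≠ Ps i ∧ Ps i ∩ Ps j ≠ Ps j

/-- A matroid subdivision of the matroid `𝓑` into the matroids `𝓜 i`. -/
def IsMatroidSubdivision {n m : ℕ} (𝓑 : Finset (Finset (Fin n)))
    (𝓜 : Fin m → Finset (Finset (Fin n))) : Prop :=
  IsBases 𝓑 ∧ (∀ i, IsBases (𝓜 i)) ∧ IsSubdivision (polytope 𝓑) fun i => polytope (𝓜 i)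

open Classical in
/-- For `A ⊆ [m]`, the matroid `M_A` whose polytope is `⋂_{a ∈ A} Q(M_a)`:
its bases are the bases of `M` whose indicator vector lies in every `Q(M_a)`, `a ∈ A`.
For `A = ∅` this is `M` itself. -/
noncomputable def interMatroid {n m : ℕ} (𝓑 : Finset (Finset (Fin n)))
    (𝓜 : Fin m → Finset (Finset (Fin n))) (A : Finset (Fin m)) : Finset (Finset (Fin n)) :=
  𝓑.filter fun B => ∀ a ∈ A, indVec n B ∈ polytope (𝓜 a)

/-- `f` is a valuation under matroid subdivisions:
`∑_{A ⊆ [m]} (-1)^{|A|} f(M_A) = 0` for every matroid subdivision. -/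
def IsValuation {n : ℕ} {G : Type*} [AddCommGroup G] (f : Finset (Finset (Fin n)) → G) : Prop :=
  ∀ (m : ℕ) (𝓑 : Finset (Finset (Fin n))) (𝓜 : Fin m → Finset (Finset (Fin n))),
    IsMatroidSubdivision 𝓑 𝓜 →
    ∑ A : Finset (Fin m), (-1 : ℤ) ^ A.card • f (interMatroid 𝓑 𝓜 A) = 0

/-!
For `k ≥ 1`, every lattice point of `k • Q(M)` lies in some `k • Q(M_i)`, and it lies in
`k • Q(M_A)` exactly when it lies in `k • Q(M_a)` for every `a ∈ A`. Hence the alternating sum of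
the lattice point counts vanishes point by point, since `∑_{A ⊆ T} (-1)^|A| = 0` for `T ≠ ∅`, and
the alternating sum of the Ehrhart polynomials has infinitely many roots.

The geometric input is that `M_A` is a matroid with `Q(M_A) = Q(M) ∩ ⋂_{a ∈ A} Q(M_a)`: this
intersection is an exposed face of `Q(M_a)`; an exposed face of a 0/1-polytope is the convex hull
of the vertices it contains; and the bases maximizing a linear functional form a matroid, by
symmetric basis exchange.
-/

variable {n : ℕ}

lemma indVec_apply_eq_zero_or_eq_one (B : Finset (Fin n)) (i : Fin n) :
    indVec n B i = 0 ∨ indVec n B i = 1 := by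
  unfold indVec; split_ifs <;> simp

lemma indVec_injective : Function.Injective (indVec n) := by
  intro B C h
  ext i
  have := congrFun h i
  simp only [indVec] at this
  split_ifs at this <;> simp_all

lemma indVec_insert {a : Fin n} {B : Finset (Fin n)} (h : a ∉ B) :
    indVec n (insert a B) = indVec n B + Pi.single a 1 := by
  ext i
  by_cases hi : i = a
  · subst hi; simp [indVec, h]
  · simp [indVec, hi]

lemma indVec_erase {a : Fin n} {B : Finset (Fin n)} (h : a ∈ B) :
    indVec n (B.erase a) = indVec n B - Pi.single a 1 := by
  ext i
  by_cases hi : i = a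
  · subst hi; simp [indVec, h]
  · simp [indVec, hi]

lemma indVec_mem_polytope {𝓒 : Finset (Finset (Fin n))} {B : Finset (Fin n)} (hB : B ∈ 𝓒) :
    indVec n B ∈ polytope 𝓒 :=
  subset_convexHull ℝ _ (Set.mem_image_of_mem _ hB)

lemma indVec_mem_extremePoints_unitCube (B : Finset (Fin n)) :
    indVec n B ∈ (Set.univ.pi fun _ => Set.Icc (0 : ℝ) 1).extremePoints ℝ := by
  rw [extremePoints_pi]
  intro i _
  rw [Set.extremePoints_Icc zero_le_one]
  rcases indVec_apply_eq_zero_or_eq_one B i with h | h <;> simp [h]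

lemma polytope_subset_unitCube (𝓒 : Finset (Finset (Fin n))) :
    polytope 𝓒 ⊆ Set.univ.pi fun _ => Set.Icc (0 : ℝ) 1 :=
  convexHull_min
    (by rintro _ ⟨B, _, rfl⟩; exact extremePoints_subset (indVec_mem_extremePoints_unitCube B))
    (convex_pi fun _ _ => convex_Icc 0 1)

lemma indVec_mem_extremePoints_of_subset_polytope {𝓒 : Finset (Finset (Fin n))}
    {s : Set (Fin n → ℝ)} (hs : s ⊆ polytope 𝓒) {B : Finset (Fin n)} (hB : indVec n B ∈ s) :
    indVec n B ∈ s.extremePoints ℝ :=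
  inter_extremePoints_subset_extremePoints_of_subset (hs.trans (polytope_subset_unitCube 𝓒))
    ⟨hB, indVec_mem_extremePoints_unitCube B⟩

lemma mem_of_indVec_mem_polytope {𝓒 : Finset (Finset (Fin n))} {B : Finset (Fin n)}
    (hB : indVec n B ∈ polytope 𝓒) : B ∈ 𝓒 := by
  obtain ⟨C, hC, hCB⟩ :=
    extremePoints_convexHull_subset (indVec_mem_extremePoints_of_subset_polytope subset_rfl hB)
  rwa [← indVec_injective hCB]

lemma IsExposed.eq_polytope_filter {𝓒 : Finset (Finset (Fin n))} {F : Set (Fin n → ℝ)}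
    [DecidablePred fun B : Finset (Fin n) => indVec n B ∈ F]
    (hF : IsExposed ℝ (polytope 𝓒) F) :
    F = polytope (𝓒.filter fun B => indVec n B ∈ F) := by
  have hP : IsCompact (polytope 𝓒) := (𝓒.finite_toSet.image _).isCompact_convexHull ℝ
  have hext : F.extremePoints ℝ = indVec n '' ↑(𝓒.filter fun B => indVec n B ∈ F) := by
    apply subset_antisymm
    · intro x hx
      obtain ⟨B, hB, rfl⟩ :=
        extremePoints_convexHull_subset (hF.isExtreme.extremePoints_subset_extremePoints hx)
      exact ⟨B, Finset.mem_filter.2 ⟨hB, extremePoints_subset hx⟩, rfl⟩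
    · rintro _ ⟨B, hB, rfl⟩
      exact indVec_mem_extremePoints_of_subset_polytope hF.subset (Finset.mem_filter.1 hB).2
  calc F = closure (convexHull ℝ (F.extremePoints ℝ)) := (closure_convexHull_extremePoints
        (hF.isCompact hP) (hF.convex (convex_convexHull ℝ _))).symm
    _ = polytope (𝓒.filter fun B => indVec n B ∈ F) := by
        rw [hext, ((Finset.finite_toSet _).image _).isClosed_convexHull ℝ |>.closure_eq]
        rfl

theorem Matroid.IsBase.exists_symm_exchange {α : Type*} {M : Matroid α} {B₁ B₂ : Set α} {e : α}
    (hB₁ : M.IsBase B₁) (hB₂ : M.IsBase B₂) (he : e ∈ B₁ \ B₂) :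
    ∃ f ∈ B₂ \ B₁, M.IsBase (insert f (B₁ \ {e})) ∧ M.IsBase (insert e (B₂ \ {f})) := by
  have hecl : e ∈ M.closure B₂ := by rw [hB₂.closure_eq]; exact hB₁.subset_ground he.1
  -- `e` is spanned by the rest of its fundamental circuit in `B₂`, but not by `B₁ \ {e}`.
  have hC := hB₂.indep.fundCircuit_isCircuit hecl he.2
  obtain ⟨f, ⟨hfC, hfe⟩, hfcl⟩ : ∃ f ∈ M.fundCircuit e B₂ \ {e}, f ∉ M.closure (B₁ \ {e}) :=
    Set.not_subset.1 fun h => hB₁.indep.notMem_closure_sdiff_of_mem he.1 <|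
      M.closure_subset_closure_of_subset_closure h
        (hC.mem_closure_sdiff_singleton_of_mem (M.mem_fundCircuit e B₂))
  have hfB₂ : f ∈ B₂ := (M.fundCircuit_subset_insert e B₂ hfC).resolve_left hfe
  have hfB₁ : f ∉ B₁ := fun h =>
    hfcl (M.subset_closure _ (Set.sdiff_subset.trans hB₁.subset_ground) ⟨h, hfe⟩)
  refine ⟨f, ⟨hfB₂, hfB₁⟩, hB₁.exchange_base_of_notMem_closure he.1 hfcl (hB₂.subset_ground hfB₂),
    hB₂.exchange_isBase_of_indep he.2 ?_⟩
  rw [Set.insert_sdiff_singleton_comm (Ne.symm hfe)]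
  exact (hB₂.indep.mem_fundCircuit_iff hecl he.2).1 hfC

namespace IsBases

variable {𝓒 : Finset (Finset (Fin n))}

noncomputable def toMatroid (h : IsBases 𝓒) (hne : 𝓒.Nonempty) : Matroid (Fin n) :=
  Matroid.ofIsBaseOfFinite Set.finite_univ (· ∈ ((↑) '' (𝓒 : Set (Finset (Fin n)))))
    (by obtain ⟨B, hB⟩ := hne; exact ⟨B, B, hB, rfl⟩) (by
      rintro _ _ ⟨B₁, hB₁, rfl⟩ ⟨B₂, hB₂, rfl⟩ a ha
      obtain ⟨b, hb, hbase⟩ := h B₁ hB₁ B₂ hB₂ a (by simpa using ha)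
      exact ⟨b, by simpa using hb, _, hbase, by simp⟩)
    (fun _ _ => Set.subset_univ _)

lemma toMatroid_isBase_coe_iff (h : IsBases 𝓒) (hne : 𝓒.Nonempty) {B : Finset (Fin n)} :
    (h.toMatroid hne).IsBase ↑B ↔ B ∈ 𝓒 :=
  Finset.coe_injective.mem_set_image

lemma exists_symm_exchange (h : IsBases 𝓒) {B₁ B₂ : Finset (Fin n)} (h₁ : B₁ ∈ 𝓒) (h₂ : B₂ ∈ 𝓒)
    {e : Fin n} (he : e ∈ B₁ \ B₂) :
    ∃ f ∈ B₂ \ B₁, insert f (B₁.erase e) ∈ 𝓒 ∧ insert e (B₂.erase f) ∈ 𝓒 := by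
  have hne : 𝓒.Nonempty := ⟨B₁, h₁⟩
  obtain ⟨f, hf, hB₁', hB₂'⟩ := Matroid.IsBase.exists_symm_exchange
    ((h.toMatroid_isBase_coe_iff hne).2 h₁) ((h.toMatroid_isBase_coe_iff hne).2 h₂)
    (e := e) (by simpa using he)
  refine ⟨f, by simpa using hf, (h.toMatroid_isBase_coe_iff hne).1 ?_,
    (h.toMatroid_isBase_coe_iff hne).1 ?_⟩ <;> simpa

-- `F` is where some functional `l` is maximal on `polytope 𝓒`. The two symmetric exchanges
-- change `l` by `l(e_f) - l(e_b)` and by its negative, so neither leaves the maximum.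
lemma filter_of_isExposed (h : IsBases 𝓒) {F : Set (Fin n → ℝ)}
    [DecidablePred fun B : Finset (Fin n) => indVec n B ∈ F] (hF : IsExposed ℝ (polytope 𝓒) F) :
    IsBases (𝓒.filter fun B => indVec n B ∈ F) := by
  intro B₁ h₁ B₂ h₂ b hb
  rw [Finset.mem_filter] at h₁ h₂
  obtain ⟨l, rfl⟩ := hF ⟨_, h₁.2⟩
  obtain ⟨f, hf, hc₁, hc₂⟩ := h.exists_symm_exchange h₁.1 h₂.1 hb
  rw [Finset.mem_sdiff] at hb hf
  have hv₁ : indVec n (insert f (B₁.erase b)) = indVec n B₁ - Pi.single b 1 + Pi.single f 1 := by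
    rw [indVec_insert fun h' => hf.2 (Finset.mem_of_mem_erase h'), indVec_erase hb.1]
  have hv₂ : indVec n (insert b (B₂.erase f)) = indVec n B₂ - Pi.single f 1 + Pi.single b 1 := by
    rw [indVec_insert fun h' => hb.2 (Finset.mem_of_mem_erase h'), indVec_erase hf.1]
  have hle₁ := h₁.2.2 _ (indVec_mem_polytope hc₁)
  have hle₂ := h₂.2.2 _ (indVec_mem_polytope hc₂)
  rw [hv₁, map_add, map_sub] at hle₁
  rw [hv₂, map_add, map_sub] at hle₂
  refine ⟨f, Finset.mem_sdiff.2 hf, Finset.mem_filter.2 ⟨hc₁, indVec_mem_polytope hc₁, ?_⟩⟩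
  intro y hy
  rw [hv₁, map_add, map_sub]
  linarith [h₁.2.2 y hy]

end IsBases

theorem Finset.sum_neg_one_pow_card_mul_card_filter_eq_zero {ι α : Type*} [Fintype ι]
    (W : Finset α) (S : ι → Set α) [∀ A : Finset ι, DecidablePred fun x => ∀ a ∈ A, x ∈ S a]
    (hW : ∀ x ∈ W, ∃ i, x ∈ S i) :
    ∑ A : Finset ι, (-1 : ℤ) ^ A.card * (W.filter fun x => ∀ a ∈ A, x ∈ S a).card = 0 := by
  classical
  simp only [Finset.card_filter, Nat.cast_sum, Nat.cast_ite, Nat.cast_one, Nat.cast_zero,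
    Finset.mul_sum, mul_ite, mul_one, mul_zero]
  rw [Finset.sum_comm]
  refine Finset.sum_eq_zero fun x hx => ?_
  obtain ⟨i, hi⟩ := hW x hx
  have hT : (Finset.univ.filter fun A : Finset ι => ∀ a ∈ A, x ∈ S a) =
      (Finset.univ.filter fun a => x ∈ S a).powerset := by
    ext A; simp [Finset.subset_iff]
  rw [← Finset.sum_filter, hT]
  exact Finset.sum_powerset_neg_one_pow_card_of_nonempty ⟨i, by simpa using hi⟩

def latticePoints (S : Set (Fin n → ℝ)) : Set (Fin n → ℝ) :=
  {x | x ∈ S ∧ ∀ i, ∃ z : ℤ, x i = z}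

lemma Bornology.IsBounded.finite_latticePoints {S : Set (Fin n → ℝ)} (hS : IsBounded S) :
    (latticePoints S).Finite := by
  obtain ⟨r, hr⟩ := hS.subset_closedBall 0
  refine (Set.Finite.pi (t := fun _ => Int.cast '' Set.Icc (-⌈r⌉) ⌈r⌉)
    fun _ => (Set.finite_Icc _ _).image _).subset ?_
  rintro x ⟨hxS, hxZ⟩ i -
  obtain ⟨z, hz⟩ := hxZ i
  have hxr : |x i| ≤ r := (norm_le_pi_norm x i).trans (mem_closedBall_zero_iff.1 (hr hxS))
  rw [hz, abs_le] at hxr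
  have hceil := Int.le_ceil r
  refine ⟨z, ⟨(Int.cast_le (R := ℝ)).1 ?_, (Int.cast_le (R := ℝ)).1 ?_⟩, hz.symm⟩ <;>
    push_cast <;> linarith

namespace IsMatroidSubdivision

open scoped Classical

variable {m : ℕ} {𝓑 : Finset (Finset (Fin n))} {𝓜 : Fin m → Finset (Finset (Fin n))}

lemma polytope_subset (hsub : IsMatroidSubdivision 𝓑 𝓜) (a : Fin m) :
    polytope (𝓜 a) ⊆ polytope 𝓑 :=
  hsub.2.2.1 ▸ Set.subset_iUnion (fun i => polytope (𝓜 i)) a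

lemma subset (hsub : IsMatroidSubdivision 𝓑 𝓜) (a : Fin m) : 𝓜 a ⊆ 𝓑 := fun _ hB =>
  mem_of_indVec_mem_polytope <| extremePoints_subset <| hsub.2.2.2.1 a <|
    indVec_mem_extremePoints_of_subset_polytope subset_rfl (indVec_mem_polytope hB)

lemma isExposed_inter_biInter (hsub : IsMatroidSubdivision 𝓑 𝓜) (a₀ : Fin m)
    (A : Finset (Fin m)) :
    IsExposed ℝ (polytope (𝓜 a₀)) (polytope (𝓜 a₀) ∩ ⋂ a ∈ A, polytope (𝓜 a)) := by
  induction A using Finset.induction_on with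
  | empty => simpa using (IsExposed.refl (𝕜 := ℝ) (polytope (𝓜 a₀)))
  | insert a A _ ih =>
    rw [Finset.set_biInter_insert, Set.inter_inter_distrib_left]
    refine IsExposed.inter ?_ ih
    obtain rfl | ha := eq_or_ne a₀ a
    · simpa using (IsExposed.refl (𝕜 := ℝ) (polytope (𝓜 a₀)))
    · exact (hsub.2.2.2.2 a₀ a ha).1

lemma interMatroid_eq_filter (hsub : IsMatroidSubdivision 𝓑 𝓜) {a₀ : Fin m} {A : Finset (Fin m)}
    (ha₀ : a₀ ∈ A) :
    interMatroid 𝓑 𝓜 A =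
      (𝓜 a₀).filter fun B => indVec n B ∈ polytope (𝓜 a₀) ∩ ⋂ a ∈ A, polytope (𝓜 a) := by
  ext B
  simp only [interMatroid, Finset.mem_filter, Set.mem_inter_iff, Set.mem_iInter₂]
  exact ⟨fun ⟨_, hB⟩ => ⟨mem_of_indVec_mem_polytope (hB a₀ ha₀), hB a₀ ha₀, hB⟩,
    fun ⟨hB, _, hB'⟩ => ⟨hsub.subset a₀ hB, hB'⟩⟩

lemma isBases_interMatroid (hsub : IsMatroidSubdivision 𝓑 𝓜) (A : Finset (Fin m)) :
    IsBases (interMatroid 𝓑 𝓜 A) := by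
  obtain rfl | ⟨a₀, ha₀⟩ := A.eq_empty_or_nonempty
  · simpa [interMatroid] using hsub.1
  · rw [hsub.interMatroid_eq_filter ha₀]
    exact (hsub.2.1 a₀).filter_of_isExposed (hsub.isExposed_inter_biInter a₀ A)

lemma mem_polytope_interMatroid_iff (hsub : IsMatroidSubdivision 𝓑 𝓜) (A : Finset (Fin m))
    {x : Fin n → ℝ} :
    x ∈ polytope (interMatroid 𝓑 𝓜 A) ↔ x ∈ polytope 𝓑 ∧ ∀ a ∈ A, x ∈ polytope (𝓜 a) := by
  obtain rfl | ⟨a₀, ha₀⟩ := A.eq_empty_or_nonempty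
  · simp [interMatroid]
  · rw [hsub.interMatroid_eq_filter ha₀,
      ← (hsub.isExposed_inter_biInter a₀ A).eq_polytope_filter]
    simp only [Set.mem_inter_iff, Set.mem_iInter₂]
    exact ⟨fun ⟨_, hx⟩ => ⟨hsub.polytope_subset a₀ (hx a₀ ha₀), hx⟩,
      fun ⟨_, hx⟩ => ⟨hx a₀ ha₀, hx⟩⟩

lemma sum_neg_one_pow_card_mul_card_latticePoints_eq_zero (hsub : IsMatroidSubdivision 𝓑 𝓜)
    {k : ℝ} (hk : k ≠ 0) :
    ∑ A : Finset (Fin m),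
      (-1 : ℤ) ^ A.card * Nat.card (latticePoints (k • polytope (interMatroid 𝓑 𝓜 A))) = 0 := by
  have hfin : (latticePoints (k • polytope 𝓑)).Finite :=
    (((𝓑.finite_toSet.image _).isCompact_convexHull ℝ).smul k).isBounded.finite_latticePoints
  have hcard : ∀ A : Finset (Fin m),
      Nat.card (latticePoints (k • polytope (interMatroid 𝓑 𝓜 A))) =
        (hfin.toFinset.filter fun x => ∀ a ∈ A, x ∈ k • polytope (𝓜 a)).card := by
    intro A
    rw [← Set.ncard_coe_finset, ← Nat.card_coe_set_eq]
    congr 2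
    ext x
    simp only [latticePoints, Finset.coe_filter, Set.Finite.mem_toFinset,
      Set.mem_smul_set_iff_inv_smul_mem₀ hk, hsub.mem_polytope_interMatroid_iff]
    exact and_right_comm
  simp only [hcard]
  refine Finset.sum_neg_one_pow_card_mul_card_filter_eq_zero hfin.toFinset
    (fun a => k • polytope (𝓜 a)) fun x hx => ?_
  rw [Set.Finite.mem_toFinset] at hx
  simpa [← hsub.2.2.1, Set.smul_set_iUnion] using hx.1

end IsMatroidSubdivision

/-- The Ehrhart polynomial `M ↦ E_{Q(M)}(x)` is a valuation: any assignment of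
polynomials `p(M)` satisfying `p(M)(k) = |k·Q(M) ∩ ℤⁿ|` for all matroids `M` and
positive integers `k` is a valuation under matroid subdivisions. -/
theorem statement_11 (n : ℕ) (p : Finset (Finset (Fin n)) → Polynomial ℚ)
    (hp : ∀ 𝓑 : Finset (Finset (Fin n)), IsBases 𝓑 → ∀ k : ℕ, 0 < k →
      (p 𝓑).eval (k : ℚ) =
        Nat.card {x : Fin n → ℝ // x ∈ (k : ℝ) • polytope 𝓑 ∧ ∀ i, ∃ z : ℤ, x i = (z : ℝ)}) :
    IsValuation p := by
  have hp' : ∀ 𝓑, IsBases 𝓑 → ∀ k : ℕ, 0 < k →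
      (p 𝓑).eval (k : ℚ) = Nat.card (latticePoints ((k : ℝ) • polytope 𝓑)) := hp
  intro m 𝓑 𝓜 hsub
  refine Polynomial.eq_zero_of_infinite_isRoot _ <| Set.infinite_of_injective_forall_mem
    (f := fun k : ℕ => ((k + 1 : ℕ) : ℚ)) (Nat.cast_injective.comp Nat.succ_injective) fun k => ?_
  have hroot := hsub.sum_neg_one_pow_card_mul_card_latticePoints_eq_zero
    (k := ((k + 1 : ℕ) : ℝ)) (by positivity)
  simp only [Set.mem_ofPred_eq, Polynomial.IsRoot.def, Polynomial.eval_finsetSum, zsmul_eq_mul,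
    Polynomial.eval_mul, Polynomial.eval_intCast, hp' _ (hsub.isBases_interMatroid _) _ k.succ_pos]
  exact_mod_cast hroot
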